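/- arXiv:1012.3892 — 2 statements merged into one kernel-verified Lean document; each statement's English description precedes it below -/
import Mathlib

section
/- Let m be a positive integer and let b_i = m·(i-1) for all positive integers i. Then for all positive integers n and k, C^b(n,k) = m^k · binom(n-1, 2k-1). -/
open Finset

/-- The number of generalized compositions of `n` with `k` parts, where the part `i`
comes in `b i` types: the sum over all `k`-tuples of positive integers summing to `n`
of the product of the `b`-values of the parts. -/
def genComp (b : ℕ → ℕ) (n k : ℕ) : ℕ :=
  ∑ f ∈ (Finset.Nat.antidiagonalTuple k n).filter (fun f => ∀ j, 0 < f j),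
    ∏ j, b (f j)

/-- The total number of generalized compositions of `n` (with any number of parts). -/
def genCompAll (b : ℕ → ℕ) (n : ℕ) : ℕ :=
  ∑ k ∈ Finset.range (n + 1), genComp b n k


/-!
Subtracting one from every part turns a composition of `n` into `k` positive parts into a
weak composition of `n - k` into `k` parts, and `b (i + 1) = m * i` makes its weight
`m ^ k * ∏ gⱼ`. The sum of `∏ gⱼ` over weak compositions of `N` into `k + 1` parts is
`(N + k).choose (2 * k + 1)`: peel off the first part and apply the upper-index Vandermonde
identity `∑_{i + j = N} C(i, p) C(j + s, q) = C(N + s + 1, p + q + 1)`.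
-/

/-- The offset `s ≤ q` lets the induction over tuples use this without reindexing the
antidiagonal. -/
theorem sum_antidiagonal_choose_mul_choose_add {s q : ℕ} (hsq : s ≤ q) (N p : ℕ) :
    ∑ ij ∈ antidiagonal N, ij.1.choose p * (ij.2 + s).choose q
      = (N + s + 1).choose (p + q + 1) := by
  induction N generalizing p with
  | zero =>
    rcases p with _ | p
    · simp [Nat.choose_succ_succ, Nat.choose_eq_zero_of_lt (show s < q + 1 by omega)]
    · simp [Nat.choose_eq_zero_of_lt (show s + 1 < p + 1 + q + 1 by omega)]
  | succ N ih =>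
    rw [Nat.sum_antidiagonal_succ]
    rcases p with _ | p
    · simpa only [Nat.choose_zero_right, one_mul, zero_add, add_right_comm N 1 s,
        Nat.choose_succ_succ' (N + s + 1)] using congrArg ((N + s + 1).choose q + ·) (ih 0)
    · calc
        _ = ∑ ij ∈ antidiagonal N, (ij.1.choose p * (ij.2 + s).choose q
              + ij.1.choose (p + 1) * (ij.2 + s).choose q) := by
          simp [Nat.choose_succ_succ', add_mul]
        _ = _ := by
          rw [sum_add_distrib, ih, ih, add_right_comm N 1 s, Nat.choose_succ_succ' (N + s + 1)]
          ring_nf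

theorem sum_antidiagonalTuple_succ {M : Type*} [AddCommMonoid M] (k n : ℕ)
    (F : (Fin (k + 1) → ℕ) → M) :
    ∑ f ∈ Nat.antidiagonalTuple (k + 1) n, F f
      = ∑ ij ∈ antidiagonal n, ∑ g ∈ Nat.antidiagonalTuple k ij.2, F (Fin.cons ij.1 g) := by
  change ((List.Nat.antidiagonalTuple (k + 1) n).map F).sum
    = ((List.Nat.antidiagonal n).map fun ij =>
        ((List.Nat.antidiagonalTuple k ij.2).map fun g => F (Fin.cons ij.1 g)).sum).sum
  simp only [List.Nat.antidiagonalTuple, List.flatMap_def, List.map_flatten, List.sum_flatten,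
    List.map_map, Function.comp_def]

theorem sum_prod_antidiagonalTuple (k N : ℕ) :
    ∑ g ∈ Nat.antidiagonalTuple (k + 1) N, ∏ j, g j = (N + k).choose (2 * k + 1) := by
  induction k generalizing N with
  | zero => simp
  | succ k ih =>
    simp only [sum_antidiagonalTuple_succ, Fin.prod_cons, ← mul_sum, ih]
    have := sum_antidiagonal_choose_mul_choose_add (by omega : k ≤ 2 * k + 1) N 1
    simp only [Nat.choose_one_right] at this
    rw [this]
    ring_nf

theorem genComp_eq_zero_of_lt (b : ℕ → ℕ) {n k : ℕ} (h : n < k) : genComp b n k = 0 := by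
  refine sum_eq_zero fun f hf => absurd h ?_
  simp only [mem_filter, Nat.mem_antidiagonalTuple] at hf
  simpa [← hf.1] using card_nsmul_le_sum univ f 1 fun j _ => hf.2 j

theorem genComp_add_eq_sum_antidiagonalTuple (b : ℕ → ℕ) (N k : ℕ) :
    genComp b (N + k) k = ∑ g ∈ Nat.antidiagonalTuple k N, ∏ j, b (g j + 1) := by
  symm
  refine sum_nbij' (fun g => g + 1) (fun f => f - 1) ?_ ?_ ?_ ?_ fun g _ => rfl
  · intro g hg
    simp_all [Nat.mem_antidiagonalTuple, sum_add_distrib]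
  · intro f hf
    simp only [mem_filter, Nat.mem_antidiagonalTuple] at hf
    rw [Nat.mem_antidiagonalTuple]
    have : ∑ j, (f j - 1 + 1) = N + k := by
      rw [← hf.1]
      exact sum_congr rfl fun j _ => Nat.sub_add_cancel (hf.2 j)
    simpa [sum_add_distrib] using this
  · intro g _
    simp
  · intro f hf
    simp only [mem_filter] at hf
    ext j
    simpa using Nat.sub_add_cancel (hf.2 j)

theorem genComp_linear_sub_general (m : ℕ) (b : ℕ → ℕ) (hb : ∀ i, 1 ≤ i → b i = m * (i - 1))
    (n k : ℕ) (hk : 1 ≤ k) :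
    genComp b n k = m ^ k * Nat.choose (n - 1) (2 * k - 1) := by
  rcases lt_or_ge n k with hlt | hle
  · rw [genComp_eq_zero_of_lt b hlt, Nat.choose_eq_zero_of_lt (by omega), mul_zero]
  obtain ⟨k, rfl⟩ := Nat.exists_eq_add_of_le' hk
  obtain ⟨N, rfl⟩ := Nat.exists_eq_add_of_le' hle
  have hb' (i : ℕ) : b (i + 1) = m * i := by simpa using hb (i + 1) (by omega)
  calc genComp b (N + (k + 1)) (k + 1)
      = ∑ g ∈ Nat.antidiagonalTuple (k + 1) N, m ^ (k + 1) * ∏ j, g j := by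
        simp [genComp_add_eq_sum_antidiagonalTuple, hb', prod_mul_distrib]
    _ = m ^ (k + 1) * (N + k).choose (2 * k + 1) := by
        rw [← mul_sum, sum_prod_antidiagonalTuple]
    _ = m ^ (k + 1) * (N + (k + 1) - 1).choose (2 * (k + 1) - 1) := by
        rw [show N + (k + 1) - 1 = N + k by omega, show 2 * (k + 1) - 1 = 2 * k + 1 by omega]

theorem genComp_linear_sub (m : ℕ) (hm : 1 ≤ m) (b : ℕ → ℕ) (hb : ∀ i, 1 ≤ i → b i = m * (i - 1))
    (n k : ℕ) (hn : 1 ≤ n) (hk : 1 ≤ k) :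
    genComp b n k = m ^ k * Nat.choose (n - 1) (2 * k - 1) :=
  genComp_linear_sub_general m b hb n k hk
end

section
/- Let b_i = c_i (the i-th Catalan number) for all positive integers i. Then for all integers n, k with 1 ≤ k ≤ n, C^b(n,k) equals the Catalan triangle number B(n,k); equivalently, n · C^b(n,k) = k · binom(2n, n+k). -/
/-!
Let `B(x) = ∑_{i ≥ 1} b_i x^i`; then `C^b(n,k)` is the coefficient of `x^n` in `B(x)^k`.
For `b = c` the Catalan series `C = 1 + x C²` gives `B = C - 1 = x C²`, so
`C^b(n,k) = [x^(n-k)] C^(2k)`. The ballot formula `(2m + s) [x^m] C^s = s · binom(2m + s, m)`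
follows by induction on `m` and `s` from `C^(s+1) = C^s + x C^(s+2)`, and with `m = n - k`,
`s = 2k` it is the claim, after `binom(2n, n - k) = binom(2n, n + k)`.
-/

open Finset

namespace PowerSeries

theorem coeff_pow_eq_sum_antidiagonalTuple {R : Type*} [CommSemiring R] (φ : R⟦X⟧) (k n : ℕ) :
    coeff n (φ ^ k) = ∑ f ∈ Nat.antidiagonalTuple k n, ∏ j, coeff (f j) φ := by
  rw [← Fin.prod_const, coeff_prod]
  refine sum_nbij' (⇑) Finsupp.equivFunOnFinite.symm ?_ ?_ ?_ ?_ ?_ <;>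
    simp [mem_finsuppAntidiag, Nat.mem_antidiagonalTuple]

theorem catalanSeries_pow_succ (s : ℕ) :
    catalanSeries ^ (s + 1) = catalanSeries ^ s + X * catalanSeries ^ (s + 2) := by
  calc catalanSeries ^ (s + 1) = catalanSeries ^ s * (catalanSeries ^ 2 * X + 1) := by
        rw [catalanSeries_sq_mul_X_add_one, pow_succ]
    _ = catalanSeries ^ s + X * catalanSeries ^ (s + 2) := by ring

theorem coeff_X_mul_catalanSeries_sq {i : ℕ} (hi : 1 ≤ i) :
    coeff i (X * catalanSeries ^ 2) = catalan i := by
  obtain ⟨i, rfl⟩ := Nat.exists_eq_add_of_le' hi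
  rw [coeff_succ_X_mul, ← catalanSeries_coeff]
  conv_rhs => rw [← catalanSeries_sq_mul_X_add_one]
  simp [coeff_succ_mul_X]

theorem coeff_catalanSeries_pow (m s : ℕ) :
    (2 * m + s) * coeff m (catalanSeries ^ s) = s * (2 * m + s).choose m := by
  induction m generalizing s with
  | zero => simp [map_pow, catalanSeries_constantCoeff]
  | succ m ihm =>
    induction s with
    | zero => simp [coeff_one]
    | succ s ihs =>
      have hc := Nat.choose_succ_right_eq (2 * m + s + 2) m
      rw [show 2 * m + s + 2 - m = m + s + 2 by omega] at hc
      have hd := Nat.add_one_mul_choose_eq (2 * m + s + 2) m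
      have hm := ihm (s + 2)
      rw [show 2 * m + (s + 2) = 2 * m + s + 2 by ring] at hm
      rw [show 2 * (m + 1) + s = 2 * m + s + 2 by ring] at ihs
      rw [catalanSeries_pow_succ, map_add, coeff_succ_X_mul,
        show 2 * (m + 1) + (s + 1) = 2 * m + s + 2 + 1 by ring]
      -- after clearing the denominators `2m+s+2` and `m+1`, both sides are multiples of
      -- `binom(2m+s+2, m)`
      apply Nat.eq_of_mul_eq_mul_left (show 0 < (2 * m + s + 2) * (m + 1) by positivity)
      linear_combination (2 * m + s + 3) * (m + 1) * (ihs + hm) + (2 * m + s + 3) * s * hc +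
        (2 * m + s + 2) * (s + 1) * hd

end PowerSeries

open PowerSeries

theorem genComp_eq_coeff_pow (b : ℕ → ℕ) (φ : ℕ⟦X⟧) (hφ₀ : constantCoeff φ = 0)
    (hφ : ∀ i, 1 ≤ i → coeff i φ = b i) (n k : ℕ) : genComp b n k = coeff n (φ ^ k) := by
  rw [coeff_pow_eq_sum_antidiagonalTuple, genComp]
  calc _ = ∑ f ∈ Nat.antidiagonalTuple k n with ∀ j, 0 < f j, ∏ j, coeff (f j) φ :=
        sum_congr rfl fun f hf => prod_congr rfl fun j _ => (hφ _ ((mem_filter.1 hf).2 j)).symm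
    _ = _ := sum_filter_of_ne fun f _ hprod j => Nat.pos_of_ne_zero fun hj =>
        hprod (prod_eq_zero (mem_univ j) (by rw [hj, coeff_zero_eq_constantCoeff_apply, hφ₀]))

theorem genComp_catalan_general (b : ℕ → ℕ) (hb : ∀ i, 1 ≤ i → b i = catalan i)
    (n k : ℕ) (hkn : k ≤ n) :
    n * genComp b n k = k * Nat.choose (2 * n) (n + k) := by
  obtain ⟨m, rfl⟩ := Nat.exists_eq_add_of_le' hkn
  have hcomp : genComp b (m + k) k = coeff m (catalanSeries ^ (2 * k)) := by
    rw [genComp_eq_coeff_pow b (X * catalanSeries ^ 2) (by simp)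
      fun i hi => by rw [coeff_X_mul_catalanSeries_sq hi, hb i hi],
      mul_pow, ← pow_mul, coeff_X_pow_mul', if_pos (by omega), Nat.add_sub_cancel]
  have hsymm : (2 * (m + k)).choose (m + k + k) = (2 * m + 2 * k).choose m := by
    rw [show 2 * (m + k) = 2 * m + 2 * k by ring]; exact Nat.choose_symm_of_eq_add (by ring)
  have hballot := coeff_catalanSeries_pow m (2 * k)
  rw [hcomp, hsymm]
  linarith

theorem genComp_catalan (b : ℕ → ℕ) (hb : ∀ i, 1 ≤ i → b i = catalan i)
    (n k : ℕ) (hk : 1 ≤ k) (hkn : k ≤ n) :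
    n * genComp b n k = k * Nat.choose (2 * n) (n + k) :=
  genComp_catalan_general b hb n k hkn
end
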